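/- arXiv:1601.06775 — 12 statements merged into one kernel-verified Lean document; each statement's English description precedes it below -/
import Mathlib

section
/- Let K = GF(2^s) with s ≥ 1, and let a ∈ K*. Then a can be written in the form a = l + 1/l for some l ∈ K* if and only if the absolute trace tr_{K/F_2}(1/a) = 0. -/
theorem stmt_0 (s : ℕ) (hs : 1 ≤ s) (K : Type) [Field K] [Fintype K]
    [Algebra (ZMod 2) K] (hK : Fintype.card K = 2 ^ s)
    (a : K) (ha : a ≠ 0) :
    (∃ l : K, l ≠ 0 ∧ a = l + l⁻¹) ↔ Algebra.trace (ZMod 2) K a⁻¹ = 0 := by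
  haveI : CharP K 2 := charP_of_injective_algebraMap (algebraMap (ZMod 2) K).injective 2
  haveI : FiniteDimensional (ZMod 2) K := Module.Finite.of_finite
  haveI : Algebra.IsAlgebraic (ZMod 2) K := Algebra.IsAlgebraic.of_finite _ _
  haveI : Algebra.IsSeparable (ZMod 2) K := inferInstance
  haveI : ExpChar K 2 := ExpChar.prime (by norm_num)
  haveI : Fact (Nat.Prime 2) := ⟨by norm_num⟩
  set T := Algebra.trace (ZMod 2) K with hT
  -- frobenius AlgEquiv
  let e : K ≃ₐ[ZMod 2] K := AlgEquiv.ofRingEquiv (f := frobeniusEquiv K 2)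
    (fun r => by
      show frobenius K 2 _ = _
      rw [frobenius_def, ← map_pow]
      congr 1
      exact ZMod.pow_card r)
  have htr : ∀ x : K, T (x ^ 2) = T x := by
    intro x
    have := Algebra.trace_eq_of_algEquiv e x
    simpa [e, frobenius_def] using this
  -- the Artin-Schreier map
  let f : K →ₗ[ZMod 2] K := e.toLinearMap - LinearMap.id
  have hf : ∀ x : K, f x = x ^ 2 - x := fun x => by
    simp [f, e, frobenius_def]
  -- kernel of f is {0, 1}
  have hker : (LinearMap.ker f : Set K) = {0, 1} := by
    ext x
    simp only [SetLike.mem_coe, LinearMap.mem_ker, hf, Set.mem_insert_iff,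
      Set.mem_singleton_iff, sub_eq_zero]
    constructor
    · intro h
      have : x * (x - 1) = 0 := by linear_combination h
      rcases mul_eq_zero.mp this with h | h
      · exact Or.inl h
      · exact Or.inr (sub_eq_zero.mp h)
    · rintro (rfl | rfl) <;> ring
  have hcardker : Nat.card (LinearMap.ker f) = 2 := by
    have h1 : Nat.card (LinearMap.ker f) = Nat.card ({0, 1} : Set K) :=
      Nat.card_congr (Equiv.setCongr hker)
    rw [h1, Nat.card_coe_set_eq, Set.ncard_pair (zero_ne_one)]
  -- range f ≤ ker T
  have hle : LinearMap.range f ≤ LinearMap.ker T := by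
    rintro _ ⟨x, rfl⟩
    simp only [LinearMap.mem_ker, hf, map_sub, htr, sub_self]
  -- counting
  have hcard1 : Nat.card K = Nat.card (LinearMap.range f) * 2 := by
    rw [Submodule.card_eq_card_quotient_mul_card (LinearMap.ker f), hcardker,
      Nat.card_congr f.quotKerEquivRange.toEquiv]
    exact Nat.mul_comm _ _
  have hTsurj : Function.Surjective T := Algebra.trace_surjective (ZMod 2) K
  have hcard2 : Nat.card K = 2 * Nat.card (LinearMap.ker T) := by
    have hq : Nat.card (K ⧸ LinearMap.ker T) = 2 := by
      rw [Nat.card_congr (LinearMap.quotKerEquivOfSurjective T hTsurj).toEquiv,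
        Nat.card_zmod]
    rw [Submodule.card_eq_card_quotient_mul_card (LinearMap.ker T), hq]
    exact Nat.mul_comm _ _
  have hcards : Nat.card (LinearMap.ker T) = Nat.card (LinearMap.range f) := by omega
  have heq : LinearMap.range f = LinearMap.ker T := by
    apply SetLike.ext'
    refine Set.eq_of_subset_of_ncard_le (fun x hx => hle hx) ?_ (Set.toFinite _)
    rw [← Nat.card_coe_set_eq, ← Nat.card_coe_set_eq]
    simp only [SetLike.coe_sort_coe]
    exact hcards.le
  have key : ∀ c : K, (∃ m : K, m ^ 2 - m = c) ↔ T c = 0 := by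
    intro c
    rw [← LinearMap.mem_ker, ← heq]
    constructor
    · rintro ⟨m, hm⟩; exact ⟨m, by rw [hf, hm]⟩
    · rintro ⟨m, hm⟩; exact ⟨m, by rw [← hf, hm]⟩
  have h2 : (2 : K) = 0 := by
    have := CharP.cast_eq_zero K 2; exact_mod_cast this
  have hinv : a⁻¹ * a = 1 := inv_mul_cancel₀ ha
  -- final algebra
  rw [← htr a⁻¹, ← key]
  constructor
  · rintro ⟨l, hl, hal⟩
    have hil : l⁻¹ * l = 1 := inv_mul_cancel₀ hl
    have hl2 : l ^ 2 - a * l = -1 := by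
      rw [hal]; linear_combination -hil
    refine ⟨a⁻¹ * l, ?_⟩
    linear_combination a⁻¹ ^ 2 * hl2 + (a⁻¹ * l) * hinv + (-(a⁻¹ ^ 2)) * h2
  · rintro ⟨m, hm⟩
    have hkey : (a * m) ^ 2 - a * (a * m) = -1 := by
      linear_combination a ^ 2 * hm + (a⁻¹ * a + 1) * hinv + h2
    have hlne : a * m ≠ 0 := by
      rintro h0
      rw [h0] at hkey
      exact one_ne_zero (by linear_combination hkey)
    refine ⟨a * m, hlne, ?_⟩
    have hinvl : (a * m)⁻¹ * (a * m) = 1 := inv_mul_cancel₀ hlne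
    linear_combination (-(a * m)⁻¹) * hkey + (a * m - a) * hinvl
end

section
/- Let F = GF(2^{2m}) ⊃ L = GF(2^m), T : F → L the trace, σ = 2^s, and C_1, C_2 ∈ F not both zero. Define x * y = T((C_1 y^σ + C_2 ȳ^σ) x) + T(xy) z, where ȳ = y^{2^m} and 1, z is a basis of F over L with z^2 + z = μ, tr(μ)=1. Then (F, +, *) is a presemifield (i.e. x * y = 0 implies x = 0 or y = 0) if and only if T(C_1 x x̄^σ + C_2 x^{σ+1}) ≠ 0 for all nonzero x ∈ F. -/
theorem stmt_3 (m s : ℕ) (hm : 1 ≤ m) (hs : s < 2 * m)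
    (L F : Type) [Field L] [Fintype L] [Field F] [Fintype F] [Algebra L F]
    [Algebra (ZMod 2) L]
    (hL : Fintype.card L = 2 ^ m) (hF : Fintype.card F = 2 ^ (2 * m))
    (μ : L) (hμ : Algebra.trace (ZMod 2) L μ = 1)
    (z : F) (hz : z ^ 2 + z = algebraMap L F μ)
    (C1 C2 : F) (hC : C1 ≠ 0 ∨ C2 ≠ 0)
    (T : F → F) (hT : ∀ x, T x = x + x ^ (2 ^ m))
    (mul : F → F → F)
    (hmul : ∀ x y, mul x y =
      T ((C1 * y ^ (2 ^ s) + C2 * (y ^ (2 ^ m)) ^ (2 ^ s)) * x) + T (x * y) * z) :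
    (∀ x y, mul x y = 0 → x = 0 ∨ y = 0) ↔
      ∀ x : F, x ≠ 0 →
        T (C1 * x * (x ^ (2 ^ m)) ^ (2 ^ s) + C2 * x ^ (2 ^ s + 1)) ≠ 0 := by
  classical
  haveI hP : CharP F (ringChar F) := ringChar.charP F
  obtain ⟨n, hp, hcard⟩ := FiniteField.card F (ringChar F)
  have h2 : ringChar F = 2 := by
    have hdvd : ringChar F ∣ 2 ^ (2 * m) := by
      rw [← hF, hcard]; exact dvd_pow_self _ n.pos.ne'
    exact (Nat.prime_dvd_prime_iff_eq hp Nat.prime_two).mp (hp.dvd_of_dvd_pow hdvd)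
  haveI charF : CharP F 2 := h2 ▸ hP
  haveI : Fact (Nat.Prime 2) := ⟨Nat.prime_two⟩
  haveI charL : CharP L 2 := ((algebraMap L F).charP_iff_charP 2).mpr charF
  -- basic power facts
  have hcard2 : ∀ u : F, u ^ (2 ^ m * 2 ^ m) = u := by
    intro u
    have h : (2 : ℕ) ^ m * 2 ^ m = Fintype.card F := by
      rw [hF, ← pow_add]; congr 1; ring
    rw [h, FiniteField.pow_card]
  have hqq : ∀ u : F, (u ^ 2 ^ m) ^ 2 ^ m = u := fun u => by
    rw [← pow_mul]; exact hcard2 u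
  have hfrob : ∀ u v : F, (u + v) ^ (2 ^ m : ℕ) = u ^ (2 ^ m : ℕ) + v ^ (2 ^ m : ℕ) :=
    fun u v => add_pow_char_pow u v 2 m
  have hT0 : ∀ u : F, T u = 0 ↔ u ^ 2 ^ m = u := by
    intro u
    rw [hT, add_comm, CharTwo.add_eq_iff_eq_add, zero_add]
  have hTfix : ∀ u : F, (T u) ^ 2 ^ m = T u := by
    intro u
    rw [hT, hfrob, hqq, add_comm]
  have hTc : ∀ u c : F, c ^ 2 ^ m = c → T (u * c) = T u * c := by
    intro u c hc
    rw [hT, hT, mul_pow, hc]; ring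
  -- z is not fixed by the m-th power Frobenius
  have hzn : ¬ z ^ 2 ^ m = z := by
    intro hfz
    have hinj : Function.Injective (algebraMap L F) := (algebraMap L F).injective
    have hLfix : ∀ a : L, a ^ 2 ^ m = a := by
      intro a; rw [← hL]; exact FiniteField.pow_card a
    set Sfin : Finset F := Finset.univ.filter fun u => u ^ 2 ^ m = u with hSfin
    set RF : Finset F := Finset.univ.image (algebraMap L F) with hRF
    have hsub : RF ⊆ Sfin := by
      intro u hu
      simp only [hRF, Finset.mem_image, Finset.mem_univ, true_and] at hu
      obtain ⟨a, rfl⟩ := hu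
      simp only [hSfin, Finset.mem_filter, Finset.mem_univ, true_and]
      rw [← map_pow, hLfix]
    set P : Polynomial F := Polynomial.X ^ (2 ^ m) - Polynomial.X with hPdef
    have hm2 : (2 : ℕ) ≤ 2 ^ m := by
      calc (2:ℕ) = 2 ^ 1 := by norm_num
      _ ≤ 2 ^ m := Nat.pow_le_pow_right (by norm_num) hm
    have hPdeg : P.natDegree = 2 ^ m := by
      rw [hPdef, Polynomial.natDegree_sub_eq_left_of_natDegree_lt] <;>
        simp [Polynomial.natDegree_X_pow, Polynomial.natDegree_X] <;> omega
    have hPne : P ≠ 0 := by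
      intro h; rw [h] at hPdeg; simp at hPdeg; omega
    have hsub2 : Sfin ⊆ P.roots.toFinset := by
      intro u hu
      simp only [hSfin, Finset.mem_filter, Finset.mem_univ, true_and] at hu
      rw [Multiset.mem_toFinset, Polynomial.mem_roots hPne]
      simp [hPdef, Polynomial.IsRoot, sub_eq_zero, hu]
    have hScard : Sfin.card ≤ 2 ^ m := by
      calc Sfin.card ≤ P.roots.toFinset.card := Finset.card_le_card hsub2
      _ ≤ Multiset.card P.roots := Multiset.toFinset_card_le _
      _ ≤ P.natDegree := Polynomial.card_roots' P
      _ = 2 ^ m := hPdeg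
    have hRFcard : RF.card = 2 ^ m := by
      rw [hRF, Finset.card_image_of_injective _ hinj, Finset.card_univ, hL]
    have heq : RF = Sfin :=
      Finset.eq_of_subset_of_card_le hsub (by rw [hRFcard]; exact hScard)
    have hzS : z ∈ Sfin := by
      simp only [hSfin, Finset.mem_filter, Finset.mem_univ, true_and]; exact hfz
    rw [← heq] at hzS
    simp only [hRF, Finset.mem_image, Finset.mem_univ, true_and] at hzS
    obtain ⟨ζ, hζ⟩ := hzS
    have hζμ : ζ ^ 2 + ζ = μ := by
      apply hinj
      rw [map_add, map_pow, hζ, hz]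
    -- the Frobenius as a ZMod 2-algebra equivalence of L
    let e : L ≃ₐ[ZMod 2] L := AlgEquiv.ofRingEquiv (f := frobeniusEquiv L 2)
      (fun c => by
        show frobenius L 2 _ = _
        rw [frobenius_def, ← map_pow]
        congr 1
        exact ZMod.pow_card c)
    have htre : Algebra.trace (ZMod 2) L (e ζ) = Algebra.trace (ZMod 2) L ζ :=
      Algebra.trace_eq_of_algEquiv e ζ
    have heζ : e ζ = ζ ^ 2 := rfl
    have : Algebra.trace (ZMod 2) L μ = 0 := by
      rw [← hζμ, map_add, ← heζ, htre, CharTwo.add_self_eq_zero]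
    rw [hμ] at this
    exact one_ne_zero this
  -- linear independence of 1, z over the fixed field
  have hind : ∀ a b : F, a ^ 2 ^ m = a → b ^ 2 ^ m = b → a + b * z = 0 → a = 0 ∧ b = 0 := by
    intro a b ha hb h
    by_cases hb0 : b = 0
    · subst hb0; rw [zero_mul, add_zero] at h; exact ⟨h, rfl⟩
    · exfalso
      apply hzn
      have ha' : a = b * z := by rwa [CharTwo.add_eq_iff_eq_add, zero_add] at h
      have hzv : z = a * b⁻¹ := by rw [ha']; field_simp
      rw [hzv, mul_pow, inv_pow, hb, ha]
  constructor
  · -- presemifield → condition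
    intro h x hx
    intro hE
    have h1 : mul x (x ^ 2 ^ m) = 0 := by
      rw [hmul]
      have e1 : (C1 * (x ^ 2 ^ m) ^ 2 ^ s + C2 * ((x ^ 2 ^ m) ^ 2 ^ m) ^ 2 ^ s) * x
          = C1 * x * (x ^ 2 ^ m) ^ 2 ^ s + C2 * x ^ (2 ^ s + 1) := by
        rw [hqq]; ring
      rw [e1, hE, zero_add]
      have e2 : T (x * x ^ 2 ^ m) = 0 := by
        rw [hT0, mul_pow, hqq]; ring
      rw [e2, zero_mul]
    rcases h x (x ^ 2 ^ m) h1 with h' | h'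
    · exact hx h'
    · exact pow_ne_zero _ hx h'
  · -- condition → presemifield
    intro h x y hxy
    by_contra hcon
    push_neg at hcon
    obtain ⟨hx, hy⟩ := hcon
    rw [hmul] at hxy
    obtain ⟨hA, hB⟩ := hind _ _ (hTfix _) (hTfix _) hxy
    have hxyS : (x * y) ^ 2 ^ m = x * y := (hT0 _).mp hB
    have hyq : y ^ 2 ^ m ≠ 0 := pow_ne_zero _ hy
    have hE := h (y ^ 2 ^ m) hyq
    apply hE
    have hxy0 : x * y ≠ 0 := mul_ne_zero hx hy
    have key : T (C1 * y ^ 2 ^ m * ((y ^ 2 ^ m) ^ 2 ^ m) ^ 2 ^ s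
        + C2 * (y ^ 2 ^ m) ^ (2 ^ s + 1)) * (x * y) = 0 := by
      rw [← hTc _ _ hxyS]
      have e3 : (C1 * y ^ 2 ^ m * ((y ^ 2 ^ m) ^ 2 ^ m) ^ 2 ^ s
          + C2 * (y ^ 2 ^ m) ^ (2 ^ s + 1)) * (x * y)
          = ((C1 * y ^ 2 ^ s + C2 * (y ^ 2 ^ m) ^ 2 ^ s) * x) * (y * y ^ 2 ^ m) := by
        rw [hqq]; ring
      rw [e3]
      have hN : (y * y ^ 2 ^ m) ^ 2 ^ m = y * y ^ 2 ^ m := by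
        rw [mul_pow, hqq]; ring
      rw [hTc _ _ hN, hA, zero_mul]
    exact (mul_eq_zero.mp key).resolve_right hxy0
end

section
/- With F = GF(2^{2m}) ⊃ L = GF(2^m), σ = 2^s, and C_1, C_2 ∈ F, the following are equivalent: (a) T(C_1 x x̄^σ + C_2 x^{σ+1}) ≠ 0 for all nonzero x ∈ F; (b) the polynomial P(X) = C_2 X^{σ+1} + C̄_1 X^σ + C_1 X + C̄_2 has no root in F of norm 1 over L. -/
/-!
The conjugation `x ↦ x̄ = x ^ 2 ^ m` is an involutive field automorphism of `F`, and for `x ≠ 0`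
one has `T (C₁ x x̄^σ + C₂ x^(σ+1)) = x̄^(σ+1) P(x / x̄)`. By Hilbert 90 the quotients
`x / x̄` with `x ≠ 0` are exactly the elements of norm `1`; for finite fields this is a counting
statement in the cyclic group `Fˣ` of order `(2^m - 1)(2^m + 1)`. Hence `T` vanishes at some
nonzero `x` iff `P` has a root of norm `1`.
-/

theorem self_add_apply_eq_pow_mul_of_involutive {F : Type*} [Field F] (φ : F →+* F)
    (hφ : ∀ x, φ (φ x) = x) (n : ℕ) (C1 C2 : F) {x : F} (hx : φ x ≠ 0) :
    C1 * x * φ x ^ n + C2 * x ^ (n + 1) + φ (C1 * x * φ x ^ n + C2 * x ^ (n + 1)) =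
      φ x ^ (n + 1) * (C2 * (x / φ x) ^ (n + 1) + φ C1 * (x / φ x) ^ n +
        C1 * (x / φ x) + φ C2) := by
  simp only [map_add, map_mul, map_pow, hφ, div_pow]
  field_simp
  ring

theorem IsCyclic.exists_pow_eq_of_pow_eq_one {G : Type*} [CommGroup G] [IsCyclic G] [Finite G]
    {a b : ℕ} (hG : Nat.card G = a * b) {g : G} (hg : g ^ b = 1) : ∃ h : G, h ^ a = g := by
  have ha : a ≠ 0 := by
    rintro rfl
    exact Nat.card_pos.ne' (by simpa using hG)
  have hle : (powMonoidHom a : G →* G).range ≤ (powMonoidHom b).ker := by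
    rintro _ ⟨h, rfl⟩
    simp [← pow_mul, ← hG, pow_card_eq_one']
  have hcard :
      Nat.card (powMonoidHom b : G →* G).ker ≤ Nat.card (powMonoidHom a : G →* G).range := by
    rw [IsCyclic.card_powMonoidHom_ker, IsCyclic.card_powMonoidHom_range, hG,
      Nat.gcd_mul_left_left, Nat.gcd_mul_right_left, Nat.mul_div_cancel_left _ ha.bot_lt]
  exact (Subgroup.eq_of_le_of_card_ge hle hcard).ge hg

section QuadraticExtension

variable {F : Type*} [Field F] [Fintype F] {q : ℕ}

theorem pow_pow_eq_self_of_card_eq_sq (hF : Fintype.card F = q ^ 2) (x : F) : (x ^ q) ^ q = x := by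
  rw [← pow_mul, ← sq, ← hF, FiniteField.pow_card]

theorem div_pow_pow_succ_eq_one (hF : Fintype.card F = q ^ 2) {x : F} (hx : x ≠ 0) :
    (x / x ^ q) ^ (q + 1) = 1 := by
  rw [pow_succ, div_pow, pow_pow_eq_self_of_card_eq_sq hF]
  field_simp

theorem exists_div_pow_eq_of_pow_succ_eq_one (hF : Fintype.card F = q ^ 2) {v : F}
    (hv : v ^ (q + 1) = 1) : ∃ x : F, x ≠ 0 ∧ x / x ^ q = v := by
  have hq : q ≠ 0 := by
    rintro rfl
    simp at hF
  have hv0 : v ≠ 0 := by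
    rintro rfl
    simp at hv
  have hcard : Nat.card Fˣ = (q - 1) * (q + 1) := by
    rw [Nat.card_units, Nat.card_eq_fintype_card, hF, mul_comm, ← Nat.sq_sub_sq, one_pow]
  obtain ⟨u, hu⟩ := IsCyclic.exists_pow_eq_of_pow_eq_one hcard (g := (Units.mk0 v hv0)⁻¹)
    (by ext; simp [hv])
  refine ⟨u, u.ne_zero, ?_⟩
  have hu' : (u : F) ^ (q - 1) = v⁻¹ := by simpa using congrArg Units.val hu
  rw [← Nat.sub_one_add_one hq, pow_succ, hu']
  field_simp [u.ne_zero]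

end QuadraticExtension

theorem stmt_4_general (m s : ℕ)
    (F : Type) [Field F] [Fintype F] (hF : Fintype.card F = 2 ^ (2 * m))
    (C1 C2 : F)
    (T : F → F) (hT : ∀ x, T x = x + x ^ (2 ^ m)) :
    (∀ x : F, x ≠ 0 →
        T (C1 * x * (x ^ (2 ^ m)) ^ (2 ^ s) + C2 * x ^ (2 ^ s + 1)) ≠ 0) ↔
      ¬ ∃ x : F, x ^ (2 ^ m + 1) = 1 ∧
        C2 * x ^ (2 ^ s + 1) + C1 ^ (2 ^ m) * x ^ (2 ^ s) + C1 * x + C2 ^ (2 ^ m) = 0 := by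
  have hF' : Fintype.card F = (2 ^ m) ^ 2 := by rw [hF, ← pow_mul, mul_comm]
  have : Fact (Nat.Prime 2) := ⟨Nat.prime_two⟩
  have : CharP F 2 := charP_of_card_eq_prime_pow hF
  have key (x : F) (hx : x ≠ 0) :
      T (C1 * x * (x ^ (2 ^ m)) ^ (2 ^ s) + C2 * x ^ (2 ^ s + 1)) =
        (x ^ 2 ^ m) ^ (2 ^ s + 1) * (C2 * (x / x ^ 2 ^ m) ^ (2 ^ s + 1) +
          C1 ^ 2 ^ m * (x / x ^ 2 ^ m) ^ 2 ^ s + C1 * (x / x ^ 2 ^ m) + C2 ^ 2 ^ m) := by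
    rw [hT]
    exact self_add_apply_eq_pow_mul_of_involutive (iterateFrobenius F 2 m)
      (pow_pow_eq_self_of_card_eq_sq hF') _ C1 C2 (pow_ne_zero _ hx)
  constructor
  · rintro h ⟨v, hv, hP⟩
    obtain ⟨x, hx, rfl⟩ := exists_div_pow_eq_of_pow_succ_eq_one hF' hv
    exact h x hx (by rw [key x hx, hP, mul_zero])
  · rintro h x hx hTx
    refine h ⟨x / x ^ 2 ^ m, div_pow_pow_succ_eq_one hF' hx, ?_⟩
    rw [key x hx] at hTx
    exact (mul_eq_zero.mp hTx).resolve_left (pow_ne_zero _ (pow_ne_zero _ hx))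

theorem stmt_4 (m s : ℕ) (hm : 1 ≤ m)
    (F : Type) [Field F] [Fintype F] (hF : Fintype.card F = 2 ^ (2 * m))
    (C1 C2 : F)
    (T : F → F) (hT : ∀ x, T x = x + x ^ (2 ^ m)) :
    (∀ x : F, x ≠ 0 →
        T (C1 * x * (x ^ (2 ^ m)) ^ (2 ^ s) + C2 * x ^ (2 ^ s + 1)) ≠ 0) ↔
      ¬ ∃ x : F, x ^ (2 ^ m + 1) = 1 ∧
        C2 * x ^ (2 ^ s + 1) + C1 ^ (2 ^ m) * x ^ (2 ^ s) + C1 * x + C2 ^ (2 ^ m) = 0 :=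
  stmt_4_general m s F hF C1 C2 T hT
end

section
/- Let F = GF(2^{2m}) ⊃ L = GF(2^m), σ = 2^s, C_1, C_2 ∈ F. If T(C_1 x x̄^σ + C_2 x^{σ+1}) ≠ 0 for all nonzero x ∈ F, then T(C_1) + T(C_2) ≠ 0. -/
theorem stmt_5 (m s : ℕ) (hm : 1 ≤ m)
    (F : Type) [Field F] [Fintype F] (hF : Fintype.card F = 2 ^ (2 * m))
    (C1 C2 : F)
    (T : F → F) (hT : ∀ x, T x = x + x ^ (2 ^ m))
    (h : ∀ x : F, x ≠ 0 →
        T (C1 * x * (x ^ (2 ^ m)) ^ (2 ^ s) + C2 * x ^ (2 ^ s + 1)) ≠ 0) :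
    T C1 + T C2 ≠ 0 := by
  have hp : CharP F (ringChar F) := ringChar.charP F
  obtain ⟨n, hprime, hcard⟩ := FiniteField.card F (ringChar F)
  have h2 : ringChar F = 2 := by
    have hdvd : ringChar F ∣ 2 ^ (2 * m) := hF ▸ hcard ▸ dvd_pow_self _ (by exact_mod_cast n.pos.ne')
    exact (Nat.prime_dvd_prime_iff_eq hprime Nat.prime_two).mp (hprime.dvd_of_dvd_pow hdvd)
  haveI : CharP F 2 := h2 ▸ hp
  have key := h 1 one_ne_zero
  simp only [one_pow, mul_one] at key
  have hadd : (C1 + C2) ^ 2 ^ m = C1 ^ 2 ^ m + C2 ^ 2 ^ m := add_pow_char_pow C1 C2 2 m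
  rw [hT] at key
  intro hc
  apply key
  rw [hT C1, hT C2] at hc
  linear_combination hc + hadd
end

section
/- Let F = GF(2^{2m}) ⊃ L = GF(2^m), σ = 2^s, C_1, C_2 ∈ F. If T(C_1 x x̄^σ + C_2 x^{σ+1}) ≠ 0 for all nonzero x ∈ F, then N(C_1) ≠ N(C_2), where N : F → L is the norm. -/
lemma h90cyc {G : Type*} [Group G] [Fintype G] [IsCyclic G] (a b : ℕ)
    (hc : Fintype.card G = a * b) (hb : b ≠ 0) (z : G) (hz : z ^ b = 1) :
    ∃ x : G, x ^ a = z := by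
  obtain ⟨g, hg⟩ := IsCyclic.exists_generator (α := G)
  obtain ⟨k, rfl⟩ := hg z
  have hord : orderOf g = a * b := by
    rw [orderOf_eq_card_of_forall_mem_zpowers hg, Nat.card_eq_fintype_card, hc]
  have h1 : g ^ (k * (b : ℤ)) = 1 := by
    rw [zpow_mul]; exact_mod_cast hz
  have h2 : ((a * b : ℕ) : ℤ) ∣ k * (b : ℤ) := by
    rw [← hord]; exact orderOf_dvd_iff_zpow_eq_one.mpr h1
  have h3 : (a : ℤ) ∣ k := by
    have hb' : (b : ℤ) ≠ 0 := by exact_mod_cast hb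
    rcases h2 with ⟨t, ht⟩
    refine ⟨t, ?_⟩
    have : k * (b : ℤ) = a * t * (b : ℤ) := by push_cast at ht ⊢; linarith [ht]
    exact mul_right_cancel₀ hb' this
  obtain ⟨t, rfl⟩ := h3
  exact ⟨g ^ t, by rw [← zpow_natCast, ← zpow_mul, mul_comm]⟩

theorem stmt_6 (m s : ℕ) (hm : 1 ≤ m)
    (F : Type) [Field F] [Fintype F] (hF : Fintype.card F = 2 ^ (2 * m))
    (C1 C2 : F)
    (T : F → F) (hT : ∀ x, T x = x + x ^ (2 ^ m))
    (N : F → F) (hN : ∀ x, N x = x ^ (2 ^ m + 1))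
    (h : ∀ x : F, x ≠ 0 →
        T (C1 * x * (x ^ (2 ^ m)) ^ (2 ^ s) + C2 * x ^ (2 ^ s + 1)) ≠ 0) :
    N C1 ≠ N C2 := by
  intro hEq
  set q : ℕ := 2 ^ m with hq
  have hqne : q ≠ 0 := pow_ne_zero m two_ne_zero
  have hq1 : 1 ≤ q := Nat.one_le_two_pow
  -- characteristic 2
  have hcast : ((2 ^ (2 * m) : ℕ) : F) = 0 := by
    rw [← hF]; exact FiniteField.cast_card_eq_zero F
  have hdvd : ringChar F ∣ 2 ^ (2 * m) := ringChar.dvd (by exact_mod_cast hcast)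
  have hprime : (ringChar F).Prime := CharP.char_is_prime F (ringChar F)
  have hchar2 : ringChar F = 2 := by
    have := hprime.dvd_of_dvd_pow hdvd
    exact (Nat.prime_dvd_prime_iff_eq hprime Nat.prime_two).mp this
  haveI : CharP F 2 := by rw [← hchar2]; exact ringChar.charP F
  have h2zero : (2 : F) = 0 := by
    have := CharP.cast_eq_zero F 2; exact_mod_cast this
  -- pow card
  have hpc : ∀ a : F, a ^ (q * q) = a := by
    intro a
    have : a ^ Fintype.card F = a := FiniteField.pow_card a
    rwa [hF, two_mul, pow_add] at this
  -- frobenius is additive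
  have hfrob : ∀ a b : F, (a + b) ^ q = a ^ q + b ^ q := by
    intro a b; exact add_pow_char_pow a b 2 m
  -- dispose of the case C2 = 0
  by_cases hC2 : C2 = 0
  · have hC1 : C1 = 0 := by
      have := hEq
      rw [hN, hN, hC2, zero_pow (Nat.succ_ne_zero q)] at this
      exact pow_eq_zero_iff (Nat.succ_ne_zero q) |>.mp this
    have := h 1 one_ne_zero
    apply this
    rw [hC1, hC2, hT]
    simp [hqne]
  -- now C2 ≠ 0, hence C1 ≠ 0
  have hNC2 : C2 ^ (q + 1) ≠ 0 := pow_ne_zero _ hC2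
  have hEq' : C1 ^ (q + 1) = C2 ^ (q + 1) := by rw [← hN, ← hN, hEq]
  have hC1 : C1 ≠ 0 := by
    intro h0
    apply hNC2
    rw [← hEq', h0, zero_pow (Nat.succ_ne_zero q)]
  have hC2q : C2 ^ q ≠ 0 := pow_ne_zero _ hC2
  -- z = C1 / C2^q has norm 1
  set z : F := C1 / C2 ^ q with hzdef
  have hz0 : z ≠ 0 := div_ne_zero hC1 hC2q
  have hzn : z ^ (q + 1) = 1 := by
    rw [hzdef, div_pow, ← pow_mul]
    have hNL : C2 ^ (q * (q + 1)) = C2 ^ (q + 1) := by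
      rw [show q * (q + 1) = q * q + q by ring, pow_add, hpc C2, pow_succ, mul_comm]
    rw [hNL, hEq']
    exact div_self hNC2
  -- Hilbert 90: find x with x^(q-1) = z
  haveI : Fintype Fˣ := Fintype.ofFinite _
  have hcardU : Fintype.card Fˣ = (q - 1) * (q + 1) := by
    rw [Fintype.card_eq_nat_card, Nat.card_units, Nat.card_eq_fintype_card, hF]
    have h2 : (2 : ℕ) ^ (2 * m) = q * q := by rw [two_mul, pow_add]
    rw [h2]
    have hqq : 1 ≤ q * q := Nat.one_le_iff_ne_zero.mpr (Nat.mul_ne_zero hqne hqne)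
    zify [hq1, hqq]
    ring
  obtain ⟨u, hu⟩ : ∃ u : Fˣ, u ^ (q - 1) = Units.mk0 z hz0 := by
    apply h90cyc (q - 1) (q + 1) hcardU (Nat.succ_ne_zero q)
    ext
    push_cast
    exact hzn
  set x : F := (u : F) with hxdef
  have hx0 : x ≠ 0 := Units.ne_zero u
  have hxz : x ^ (q - 1) = z := by
    have := congrArg (Units.val) hu
    push_cast at this
    exact this
  -- key identities
  have hxq : x ^ q = z * x := by
    have : x ^ q = x ^ (q - 1) * x := by
      rw [← pow_succ]; congr 1; omega
    rw [this, hxz]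
  have key1 : C2 ^ q * x ^ q = C1 * x := by
    rw [hxq, hzdef]
    field_simp
  have key2 : C2 * x = C1 ^ q * x ^ q := by
    have hc := congrArg (· ^ q) key1
    simp only [mul_pow, ← pow_mul] at hc
    rw [hpc C2, hpc x] at hc
    exact hc
  -- apply h to x
  apply h x hx0
  rw [hT, hfrob]
  have hxx : (x ^ q) ^ q = x := by rw [← pow_mul]; exact hpc x
  have e1 : (C1 * x * (x ^ q) ^ 2 ^ s) ^ q = C1 ^ q * x ^ q * x ^ 2 ^ s := by
    rw [mul_pow, mul_pow, ← pow_mul, show 2 ^ s * q = q * 2 ^ s from mul_comm _ _,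
      pow_mul, hxx]
  have e2 : (C2 * x ^ (2 ^ s + 1)) ^ q = C2 ^ q * (x ^ q) ^ (2 ^ s + 1) := by
    rw [mul_pow, ← pow_mul, mul_comm (2 ^ s + 1) q, pow_mul]
  rw [e1, e2]
  linear_combination (x ^ q) ^ (2 ^ s) * key1 + x ^ (2 ^ s) * key2 +
    (C1 * x * (x ^ q) ^ 2 ^ s + C1 ^ q * x ^ q * x ^ 2 ^ s) * h2zero
end

section
/- Let L = GF(2^m), F = GF(2^{2m}), T : F → L the trace, σ = 2^s, l ∈ L* with l ∉ (L*)^{σ−1}, and C_1, C_2 ∈ F such that T(C_1 x x̄^σ + C_2 x^{σ+1}) ≠ 0 for all nonzero x ∈ F. Define x * y = T((C_1 y^σ + C_2 ȳ^σ)x) + l·T((C̄_1 y + C_2 ȳ) x^σ) + T(xy)·z, where 1, z is a basis of F over L with z^2 + z = μ, tr(μ) = 1. Then x * y = 0 implies x = 0 or y = 0; i.e., (F, +, *) is a presemifield. -/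
/-!
Conjugation `x ↦ x̄ = x ^ 2 ^ m` is an involution of `F` whose fixed points are exactly `L`, and
`T u = u + ū`. Conjugating `x * y = 0` and using `z̄ ≠ z` (a root of `X² + X = μ` with `tr μ = 1`
is not in `L`) kills the coefficient `T (x y)`, so `x y ∈ L`. Then `y = b x̄` with
`b = x y / (x x̄) ∈ L`, and both remaining traces are multiples of
`N = T (C₁ x x̄^σ + C₂ x^(σ+1)) ≠ 0`: the product becomes `(b^σ + l b) N`. Hence `b^(σ-1) = l`.
-/

open Function

theorem FiniteField.mem_range_algebraMap_iff_pow_card_eq {K L : Type*} [Field K] [Fintype K]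
    [Field L] [Finite L] [Algebra K L] {x : L} :
    x ∈ Set.range (algebraMap K L) ↔ x ^ Fintype.card K = x := by
  refine ⟨?_, fun hx ↦ (IsGalois.mem_range_algebraMap_iff_fixed x).2 fun f ↦ ?_⟩
  · rintro ⟨c, rfl⟩
    rw [← map_pow, FiniteField.pow_card]
  · obtain ⟨n, rfl⟩ := (bijective_frobeniusAlgEquivOfAlgebraic_pow K L).2 f
    rw [AlgEquiv.coe_pow]
    exact iterate_fixed hx n

theorem Algebra.trace_pow_card {K L : Type*} [Field K] [Fintype K] [Field L] [Finite L]
    [Algebra K L] (x : L) : Algebra.trace K L (x ^ Fintype.card K) = Algebra.trace K L x :=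
  Algebra.trace_eq_of_algEquiv (FiniteField.frobeniusAlgEquivOfAlgebraic K L) x

theorem Algebra.trace_zmod_two_sq_add_self {L : Type*} [Field L] [Finite L] [Algebra (ZMod 2) L]
    (w : L) : Algebra.trace (ZMod 2) L (w ^ 2 + w) = 0 := by
  have h := Algebra.trace_pow_card (K := ZMod 2) w
  rw [ZMod.card] at h
  rw [map_add, h, CharTwo.add_self_eq_zero]

section RelTrace

variable {F : Type*} [Field F] (ι : F →+* F)

/-- For `ι` the conjugation of `F / L`, this is the relative trace `T`. -/
def relTrace (u : F) : F := u + ι u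

/-- The product `x * y` of the statement, with `σ = k` and `ȳ = ι y`. -/
def presemifieldMul (C₁ C₂ l z : F) (k : ℕ) (x y : F) : F :=
  relTrace ι ((C₁ * y ^ k + C₂ * ι y ^ k) * x) +
    l * relTrace ι ((ι C₁ * y + C₂ * ι y) * x ^ k) + relTrace ι (x * y) * z

variable {ι}

theorem map_relTrace (hι : Involutive ι) (u : F) : ι (relTrace ι u) = relTrace ι u := by
  rw [relTrace, map_add, hι u, add_comm]

theorem relTrace_mul_of_fixed {c : F} (hc : ι c = c) (u : F) :
    relTrace ι (c * u) = c * relTrace ι u := by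
  rw [relTrace, relTrace, map_mul, hc, mul_add]

theorem fixed_of_relTrace_eq_zero [CharP F 2] {u : F} (hu : relTrace ι u = 0) : ι u = u :=
  (CharTwo.add_eq_zero.1 hu).symm

theorem exists_fixed_eq_mul_of_mul_fixed (hι : Involutive ι) {x y : F} (hx : x ≠ 0)
    (hxy : ι (x * y) = x * y) : ∃ b, ι b = b ∧ y = b * ι x := by
  have hιx : ι x ≠ 0 := (map_ne_zero ι).2 hx
  refine ⟨x * y / (x * ι x), ?_, ?_⟩
  · rw [map_div₀, hxy, map_mul, hι x, mul_comm (ι x)]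
  · field_simp

theorem eq_zero_of_fixed_add_mul_eq_zero {α β z : F} (hα : ι α = α) (hβ : ι β = β)
    (hz : ι z ≠ z) (h : α + β * z = 0) : β = 0 := by
  have hι : α + β * ι z = 0 := by simpa [hα, hβ] using congrArg ι h
  have : β * (z - ι z) = 0 := by linear_combination h - hι
  exact (mul_eq_zero.1 this).resolve_right (sub_ne_zero.2 hz.symm)

variable (C₁ C₂ : F) (k : ℕ)

theorem relTrace_left_eq_pow_mul (hι : Involutive ι) {b x y : F} (hb : ι b = b)
    (hy : y = b * ι x) :
    relTrace ι ((C₁ * y ^ k + C₂ * ι y ^ k) * x) =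
      b ^ k * relTrace ι (C₁ * x * ι x ^ k + C₂ * x ^ (k + 1)) := by
  rw [← relTrace_mul_of_fixed (by rw [map_pow, hb]), hy, map_mul, hb, hι x]
  ring_nf

theorem relTrace_right_eq_mul (hι : Involutive ι) {b x y : F} (hb : ι b = b)
    (hy : y = b * ι x) :
    relTrace ι ((ι C₁ * y + C₂ * ι y) * x ^ k) =
      b * relTrace ι (C₁ * x * ι x ^ k + C₂ * x ^ (k + 1)) := by
  rw [← relTrace_mul_of_fixed hb, hy, map_mul, hb, hι x]
  simp only [relTrace, map_add, map_mul, map_pow, hι _, hb]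
  ring

theorem eq_zero_or_eq_zero_of_presemifieldMul_eq_zero [CharP F 2] (hι : Involutive ι)
    {l z x y : F} (hz : ι z ≠ z) (hl : ι l = l)
    (hlk : ∀ b, ι b = b → b ≠ 0 → b ^ k + l * b ≠ 0)
    (hC : ∀ x ≠ 0, relTrace ι (C₁ * x * ι x ^ k + C₂ * x ^ (k + 1)) ≠ 0)
    (h : presemifieldMul ι C₁ C₂ l z k x y = 0) : x = 0 ∨ y = 0 := by
  by_contra! ⟨hx, hy⟩
  have hxy := eq_zero_of_fixed_add_mul_eq_zero
    (by simp only [map_add, map_mul, map_relTrace hι, hl]) (map_relTrace hι _) hz h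
  obtain ⟨b, hb, rfl⟩ := exists_fixed_eq_mul_of_mul_fixed hι hx (fixed_of_relTrace_eq_zero hxy)
  rw [presemifieldMul, hxy, zero_mul, add_zero, relTrace_left_eq_pow_mul C₁ C₂ k hι hb rfl,
    relTrace_right_eq_mul C₁ C₂ k hι hb rfl] at h
  have hbN : (b ^ k + l * b) * relTrace ι (C₁ * x * ι x ^ k + C₂ * x ^ (k + 1)) = 0 := by
    linear_combination h
  refine hlk b hb ?_ ((mul_eq_zero.1 hbN).resolve_right (hC x hx))
  rintro rfl
  simp at hy

end RelTrace

theorem stmt_11_general (m s : ℕ)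
    (L F : Type) [Field L] [Fintype L] [Field F] [Fintype F] [Algebra L F]
    [Algebra (ZMod 2) L]
    (hL : Fintype.card L = 2 ^ m) (hF : Fintype.card F = 2 ^ (2 * m))
    (μ : L) (hμ : Algebra.trace (ZMod 2) L μ = 1)
    (z : F) (hz : z ^ 2 + z = algebraMap L F μ)
    (l : L) (hl' : ¬ ∃ c : L, c ≠ 0 ∧ l = c ^ (2 ^ s - 1))
    (C1 C2 : F)
    (T : F → F) (hT : ∀ x, T x = x + x ^ (2 ^ m))
    (hC : ∀ x : F, x ≠ 0 →
        T (C1 * x * (x ^ (2 ^ m)) ^ (2 ^ s) + C2 * x ^ (2 ^ s + 1)) ≠ 0)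
    (mul : F → F → F)
    (hmul : ∀ x y, mul x y =
      T ((C1 * y ^ (2 ^ s) + C2 * (y ^ (2 ^ m)) ^ (2 ^ s)) * x) +
        algebraMap L F l * T ((C1 ^ (2 ^ m) * y + C2 * y ^ (2 ^ m)) * x ^ (2 ^ s)) +
        T (x * y) * z) :
    ∀ x y : F, mul x y = 0 → x = 0 ∨ y = 0 := by
  intro x y hxy
  have : CharP L 2 := charP_of_injective_ringHom (algebraMap (ZMod 2) L).injective 2
  have : CharP F 2 := charP_of_injective_ringHom (algebraMap L F).injective 2
  set ι := iterateFrobenius F 2 m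
  have hpow (u : F) : u ^ 2 ^ m = ι u := rfl
  obtain rfl : T = relTrace ι := funext hT
  have hfix (u : F) : ι u = u ↔ u ∈ Set.range (algebraMap L F) := by
    rw [← hpow, ← hL, FiniteField.mem_range_algebraMap_iff_pow_card_eq]
  have hι : Involutive ι := fun u ↦ by
    rw [← hpow, ← hpow, ← pow_mul, ← pow_add, ← two_mul, ← hF, FiniteField.pow_card]
  have hzι : ι z ≠ z := by
    intro hzfix
    obtain ⟨w, rfl⟩ := (hfix z).1 hzfix
    rw [← map_pow, ← map_add, (algebraMap L F).injective.eq_iff] at hz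
    simp [← hz, Algebra.trace_zmod_two_sq_add_self] at hμ
  have hlk (b : F) (hb : ι b = b) (hb0 : b ≠ 0) : b ^ 2 ^ s + algebraMap L F l * b ≠ 0 := by
    obtain ⟨c, rfl⟩ := (hfix b).1 hb
    rw [← map_pow, ← map_mul, ← map_add, map_ne_zero, Ne, CharTwo.add_eq_zero]
    intro hc
    refine hl' ⟨c, (map_ne_zero _).1 hb0, mul_right_cancel₀ ((map_ne_zero _).1 hb0) ?_⟩
    rw [← hc, ← pow_succ, Nat.sub_add_cancel Nat.one_le_two_pow]
  simp only [hpow, hmul] at hC hxy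
  exact eq_zero_or_eq_zero_of_presemifieldMul_eq_zero C1 C2 (2 ^ s) hι hzι
    ((hfix _).2 ⟨l, rfl⟩) hlk hC hxy

theorem stmt_11 (m s : ℕ) (hm : 1 ≤ m)
    (L F : Type) [Field L] [Fintype L] [Field F] [Fintype F] [Algebra L F]
    [Algebra (ZMod 2) L]
    (hL : Fintype.card L = 2 ^ m) (hF : Fintype.card F = 2 ^ (2 * m))
    (μ : L) (hμ : Algebra.trace (ZMod 2) L μ = 1)
    (z : F) (hz : z ^ 2 + z = algebraMap L F μ)
    (l : L) (hl : l ≠ 0) (hl' : ¬ ∃ c : L, c ≠ 0 ∧ l = c ^ (2 ^ s - 1))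
    (C1 C2 : F)
    (T : F → F) (hT : ∀ x, T x = x + x ^ (2 ^ m))
    (hC : ∀ x : F, x ≠ 0 →
        T (C1 * x * (x ^ (2 ^ m)) ^ (2 ^ s) + C2 * x ^ (2 ^ s + 1)) ≠ 0)
    (mul : F → F → F)
    (hmul : ∀ x y, mul x y =
      T ((C1 * y ^ (2 ^ s) + C2 * (y ^ (2 ^ m)) ^ (2 ^ s)) * x) +
        algebraMap L F l * T ((C1 ^ (2 ^ m) * y + C2 * y ^ (2 ^ m)) * x ^ (2 ^ s)) +
        T (x * y) * z) :
    ∀ x y : F, mul x y = 0 → x = 0 ∨ y = 0 :=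
  stmt_11_general m s L F hL hF μ hμ z hz l hl' C1 C2 T hT hC mul hmul
end

section
/- Let K = GF(q) ⊂ L = GF(q^2) with q = 2^s, and let w ∈ L \ K such that tr_{K/F_2}(1/τ(w)) = 0, where τ(w) = w + w^q. Then the multiplication (a,b) ⋆ (c,d) = (ac + bd^q + w b^q d, a^q d + bc) on L × L has no zero divisors; i.e., B_q(w) is a semifield of order q^4 with unit (1,0). -/
/-!
Eliminating `c` from `(a, b) ⋆ (c, d) = 0` with `b, d ≠ 0` and applying the Frobenius
`σ x = x ^ q` gives `(N a - w N b) (N a - σ w N b) = (N b) ^ 2` for the norms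
`N z = σ z * z ∈ K`, so `x = N a / N b ∈ K` satisfies `(x - w) (x - σ w) = 1`. The trace
condition makes `u ^ 2 + τ(w) u = 1` solvable in `K` (additive Hilbert 90 over `𝔽₂`), and in
characteristic 2 this says that `(X - w) (X - σ w)` vanishes at `x + u ∈ K`, forcing `w ∈ K`.
-/

namespace FiniteField

variable {K L : Type*} [Field K] [Fintype K] [Field L] [Algebra K L]

theorem mem_range_algebraMap_iff_frobeniusAlgHom_eq [Finite L] (x : L) :
    x ∈ Set.range (algebraMap K L) ↔ frobeniusAlgHom K L x = x := by
  rw [IsGalois.mem_range_algebraMap_iff_fixed]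
  refine ⟨fun h => h (frobeniusAlgEquivOfAlgebraic K L), fun h g => ?_⟩
  obtain ⟨n, rfl⟩ := (bijective_frobeniusAlgEquivOfAlgebraic_pow K L).2 g
  rw [AlgEquiv.coe_pow]
  exact Function.iterate_fixed h _

theorem frobeniusAlgHom_involutive [Fintype L] (hL : Fintype.card L = Fintype.card K ^ 2) :
    Function.Involutive (frobeniusAlgHom K L) := fun x => by
  show (x ^ _) ^ _ = x
  rw [← pow_mul, ← sq, ← hL, pow_card]

theorem finrank_eq_two_of_card_eq_sq [Fintype L] (hL : Fintype.card L = Fintype.card K ^ 2) :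
    Module.finrank K L = 2 :=
  Nat.pow_right_injective Fintype.one_lt_card (Module.card_eq_pow_finrank.symm.trans hL)

theorem algebraMap_trace_eq_add_frobeniusAlgHom [Finite L] (h : Module.finrank K L = 2) (x : L) :
    algebraMap K L (Algebra.trace K L x) = x + frobeniusAlgHom K L x := by
  simp [algebraMap_trace_eq_sum_pow, h, Finset.sum_range_succ, Nat.card_eq_fintype_card]

end FiniteField

theorem exists_sq_add_self_eq_of_trace_eq_zero {K : Type*} [Field K] [Finite K]
    [Algebra (ZMod 2) K] {e : K} (he : Algebra.trace (ZMod 2) K e = 0) :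
    ∃ k : K, k ^ 2 + k = e := by
  have : CharP K 2 := charP_of_injective_algebraMap (algebraMap (ZMod 2) K).injective 2
  let tr : K →+ ZMod 2 := (Algebra.trace (ZMod 2) K).toAddMonoidHom
  let f : K →+ K :=
    { toFun := fun x => x ^ 2 + x
      map_zero' := by simp
      map_add' := fun x y => by rw [add_pow_char]; ring }
  -- `f` is at most 2-to-1 and `tr` is onto `ZMod 2`, so `range f` is at least as large as `ker tr`.
  have hker : Nat.card f.ker ≤ 2 := by
    have hsub : (f.ker : Set K) ⊆ {0, 1} := fun x hx => by
      have hx : x ^ 2 + x = 0 := hx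
      replace hx : x * (x + 1) = 0 := by linear_combination hx
      rcases mul_eq_zero.1 hx with h | h
      · exact .inl h
      · exact .inr (CharTwo.add_eq_zero.1 h)
    rw [← SetLike.coe_sort_coe, Nat.card_coe_set_eq]
    exact (Set.ncard_le_ncard hsub).trans ((Set.ncard_insert_le _ _).trans (by simp))
  have hle : f.range ≤ tr.ker := by
    rintro _ ⟨y, rfl⟩
    have hfrob : Algebra.trace (ZMod 2) K (y ^ 2) = Algebra.trace (ZMod 2) K y := by
      simpa [ZMod.card] using
        Algebra.trace_eq_of_algEquiv (FiniteField.frobeniusAlgEquivOfAlgebraic (ZMod 2) K) y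
    show Algebra.trace (ZMod 2) K (y ^ 2 + y) = 0
    rw [map_add, hfrob, CharTwo.add_self_eq_zero]
  have hcard : Nat.card tr.ker ≤ Nat.card f.range := by
    have htr : Nat.card tr.range = 2 := by
      rw [AddMonoidHom.range_eq_top.2 (Algebra.trace_surjective (ZMod 2) K), AddSubgroup.card_top,
        Nat.card_zmod]
    have h₁ := f.ker.card_mul_index
    have h₂ := tr.ker.card_mul_index
    rw [AddSubgroup.index_ker] at h₁ h₂
    nlinarith
  have he : e ∈ tr.ker := he
  rw [← AddSubgroup.eq_of_le_of_card_ge hle hcard] at he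
  exact he

theorem exists_sq_add_mul_self_eq_one {K : Type*} [Field K] [Finite K] [Algebra (ZMod 2) K]
    {T : K} (hT : T ≠ 0) (htr : Algebra.trace (ZMod 2) K T⁻¹ = 0) :
    ∃ u : K, u ^ 2 + T * u = 1 := by
  have : CharP K 2 := charP_of_injective_algebraMap (algebraMap (ZMod 2) K).injective 2
  obtain ⟨k, hk⟩ := exists_sq_add_self_eq_of_trace_eq_zero htr
  refine ⟨T * k ^ 2, ?_⟩
  calc (T * k ^ 2) ^ 2 + T * (T * k ^ 2) = (T * (k ^ 2 + k)) ^ 2 := by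
        linear_combination (-T ^ 2 * k ^ 3) * CharP.cast_eq_zero K 2
    _ = 1 := by rw [hk, mul_inv_cancel₀ hT, one_pow]

section TwistedMul

variable {L : Type*} [Field L] (σ : L →+* L) (w : L)

def twistedMul (x y : L × L) : L × L :=
  (x.1 * y.1 + x.2 * σ y.2 + w * σ x.2 * y.2, σ x.1 * y.2 + x.2 * y.1)

theorem twistedMul_one_right (x : L × L) : twistedMul σ w x (1, 0) = x := by
  simp [twistedMul]

theorem twistedMul_one_left (x : L × L) : twistedMul σ w (1, 0) x = x := by
  simp [twistedMul]

variable {σ}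

theorem sub_mul_sub_eq_sq_of_twistedMul_eq_zero (hσ : Function.Involutive σ) {a b c d : L}
    (h : twistedMul σ w (a, b) (c, d) = 0) (hd : d ≠ 0) :
    (σ a * a - w * (σ b * b)) * (σ a * a - σ w * (σ b * b)) = (σ b * b) ^ 2 := by
  obtain ⟨h₁, h₂⟩ := Prod.ext_iff.1 h
  simp only [twistedMul, Prod.fst_zero, Prod.snd_zero] at h₁ h₂
  have hE : b ^ 2 * σ d = (σ a * a - w * (σ b * b)) * d := by
    linear_combination b * h₁ - a * h₂
  have hσE : σ b ^ 2 * d = (σ a * a - σ w * (σ b * b)) * σ d := by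
    have := congrArg σ hE
    simp only [map_mul, map_sub, map_pow, hσ _] at this
    linear_combination this
  have hdd : d * σ d ≠ 0 := mul_ne_zero hd ((map_ne_zero σ).2 hd)
  apply mul_right_cancel₀ hdd
  linear_combination -(σ a * a - σ w * (σ b * b)) * σ d * hE - b ^ 2 * σ d * hσE

theorem sub_mul_sub_ne_one [CharP L 2] (hσ : Function.Involutive σ) {w : L} (hw : σ w ≠ w)
    {u : L} (hu : σ u = u) (hu₁ : u ^ 2 + (w + σ w) * u = 1) {x : L} (hx : σ x = x) :
    (x - w) * (x - σ w) ≠ 1 := by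
  intro h
  have hroot : (x + u - w) * (x + u - σ w) = 0 := by
    linear_combination h + hu₁ + (u * x - u * (w + σ w) + 1) * CharP.cast_eq_zero L 2
  rcases mul_eq_zero.1 hroot with h | h
  · apply hw
    rw [← sub_eq_zero.1 h, map_add, hx, hu]
  · apply hw
    have hσw : σ w = x + u := (sub_eq_zero.1 h).symm
    rw [hσw, ← hσ w, hσw, map_add, hx, hu]

theorem eq_zero_or_eq_zero_of_twistedMul_eq_zero [CharP L 2] (hσ : Function.Involutive σ)
    {w : L} (hw : σ w ≠ w) {u : L} (hu : σ u = u) (hu₁ : u ^ 2 + (w + σ w) * u = 1)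
    {x y : L × L} (h : twistedMul σ w x y = 0) : x = 0 ∨ y = 0 := by
  obtain ⟨a, b⟩ := x
  obtain ⟨c, d⟩ := y
  have hnorm : ∀ z, σ (σ z * z) = σ z * z := fun z => by rw [map_mul, hσ z, mul_comm]
  obtain ⟨h₁, h₂⟩ := Prod.ext_iff.1 h
  simp only [twistedMul, Prod.fst_zero, Prod.snd_zero] at h₁ h₂
  by_cases hd : d = 0
  · subst hd
    simp only [map_zero, mul_zero, add_zero, zero_add] at h₁ h₂
    rcases eq_or_ne c 0 with rfl | hc
    · exact .inr rfl
    · simp [(mul_eq_zero.1 h₁).resolve_right hc, (mul_eq_zero.1 h₂).resolve_right hc]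
  by_cases hb : b = 0
  · subst hb
    simp only [zero_mul, add_zero, map_eq_zero, mul_eq_zero, hd, or_false] at h₂
    simp [h₂]
  have hσb : σ b ≠ 0 := (map_ne_zero σ).2 hb
  refine absurd ?_ (sub_mul_sub_ne_one hσ hw hu hu₁ (x := σ a * a / (σ b * b)) ?_)
  · field_simp
    linear_combination sub_mul_sub_eq_sq_of_twistedMul_eq_zero w hσ h hd
  · rw [map_div₀, hnorm, hnorm]

end TwistedMul

theorem stmt_12_general (s : ℕ)
    (K L : Type) [Field K] [Fintype K] [Field L] [Fintype L] [Algebra K L]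
    [Algebra (ZMod 2) K]
    (hK : Fintype.card K = 2 ^ s) (hL : Fintype.card L = 2 ^ (2 * s))
    (w : L) (hw : w ∉ Set.range (algebraMap K L))
    (htr : Algebra.trace (ZMod 2) K ((Algebra.trace K L w)⁻¹) = 0)
    (mul : L × L → L × L → L × L)
    (hmul : ∀ a b c d : L, mul (a, b) (c, d) =
      (a * c + b * d ^ (2 ^ s) + w * b ^ (2 ^ s) * d, a ^ (2 ^ s) * d + b * c)) :
    (∀ x : L × L, mul x (1, 0) = x ∧ mul (1, 0) x = x) ∧
    (∀ x y : L × L, mul x y = 0 → x = 0 ∨ y = 0) := by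
  have : CharP K 2 := charP_of_injective_algebraMap (algebraMap (ZMod 2) K).injective 2
  have : CharP L 2 := charP_of_injective_algebraMap (algebraMap K L).injective 2
  have hLK : Fintype.card L = Fintype.card K ^ 2 := by rw [hL, hK, ← pow_mul, mul_comm]
  let σ : L →+* L := FiniteField.frobeniusAlgHom K L
  have hσ : Function.Involutive σ := FiniteField.frobeniusAlgHom_involutive hLK
  have hmul' : mul = twistedMul σ w := by
    ext1 ⟨a, b⟩; ext1 ⟨c, d⟩
    simp [hmul, twistedMul, σ, hK]
  have hσw : σ w ≠ w := fun h =>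
    hw ((FiniteField.mem_range_algebraMap_iff_frobeniusAlgHom_eq w).2 h)
  have htrace : algebraMap K L (Algebra.trace K L w) = w + σ w :=
    FiniteField.algebraMap_trace_eq_add_frobeniusAlgHom
      (FiniteField.finrank_eq_two_of_card_eq_sq hLK) w
  have hT : Algebra.trace K L w ≠ 0 := by
    intro h
    rw [h, map_zero, eq_comm, CharTwo.add_eq_zero] at htrace
    exact hσw htrace.symm
  obtain ⟨u, hu⟩ := exists_sq_add_mul_self_eq_one hT htr
  subst hmul'
  refine ⟨fun x => ⟨twistedMul_one_right σ w x, twistedMul_one_left σ w x⟩,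
    fun x y => eq_zero_or_eq_zero_of_twistedMul_eq_zero hσ hσw
      ((FiniteField.frobeniusAlgHom K L).commutes u) ?_⟩
  rw [← htrace]
  simpa using congrArg (algebraMap K L) hu

theorem stmt_12 (s : ℕ) (hs : 1 ≤ s)
    (K L : Type) [Field K] [Fintype K] [Field L] [Fintype L] [Algebra K L]
    [Algebra (ZMod 2) K]
    (hK : Fintype.card K = 2 ^ s) (hL : Fintype.card L = 2 ^ (2 * s))
    (w : L) (hw : w ∉ Set.range (algebraMap K L))
    (htr : Algebra.trace (ZMod 2) K ((Algebra.trace K L w)⁻¹) = 0)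
    (mul : L × L → L × L → L × L)
    (hmul : ∀ a b c d : L, mul (a, b) (c, d) =
      (a * c + b * d ^ (2 ^ s) + w * b ^ (2 ^ s) * d, a ^ (2 ^ s) * d + b * c)) :
    (∀ x : L × L, mul x (1, 0) = x ∧ mul (1, 0) x = x) ∧
    (∀ x y : L × L, mul x y = 0 → x = 0 ∨ y = 0) :=
  stmt_12_general s K L hK hL w hw htr mul hmul
end

section
/- Let K = GF(q) ⊂ L = GF(q^2), q = 2^s, and w ∈ L \ K with tr_{K/F_2}(1/(w + w^q)) = 0. Then w^{q+1} ≠ 1. -/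
open Polynomial

/-- Any element of `L` fixed by the `|K|`-power map lies in the image of `K`. -/
lemma aux_fixed_mem_range (K L : Type) [Field K] [Fintype K] [Field L] [Fintype L]
    [Algebra K L] (x : L) (hx : x ^ Fintype.card K = x) :
    x ∈ Set.range (algebraMap K L) := by
  classical
  set q := Fintype.card K with hq
  have hq2 : 2 ≤ q := Fintype.one_lt_card
  set p : L[X] := X ^ q - X with hp
  have hdeg : p.natDegree = q := by
    rw [hp, natDegree_sub_eq_left_of_natDegree_lt] <;> simp <;> omega
  have hp0 : p ≠ 0 := by
    intro h; rw [h] at hdeg; simp at hdeg; omega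
  set S : Finset L := Finset.univ.image (algebraMap K L) with hS
  have hcardS : S.card = q := by
    rw [hS, Finset.card_image_of_injective _ (algebraMap K L).injective, Finset.card_univ]
  have hsub : S ⊆ p.roots.toFinset := by
    intro y hy
    rw [Multiset.mem_toFinset, mem_roots hp0]
    simp only [hS, Finset.mem_image] at hy
    obtain ⟨k, _, rfl⟩ := hy
    simp only [hp, IsRoot, eval_sub, eval_pow, eval_X, ← map_pow]
    rw [hq, FiniteField.pow_card, sub_self]
  have hcard : p.roots.toFinset.card ≤ q :=
    le_trans (Multiset.toFinset_card_le _) (le_trans (card_roots' p) (le_of_eq hdeg))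
  have heq : S = p.roots.toFinset := Finset.eq_of_subset_of_card_le hsub (by omega)
  have hxS : x ∈ p.roots.toFinset := by
    rw [Multiset.mem_toFinset, mem_roots hp0]
    simp [hp, IsRoot, hx]
  rw [← heq] at hxS
  simp only [hS, Finset.mem_image] at hxS
  obtain ⟨k, _, rfl⟩ := hxS
  exact ⟨k, rfl⟩

/-- Artin–Schreier: in a finite field of characteristic 2, any element of trace zero
over `ZMod 2` is of the form `y² + y`. -/
lemma aux_artin_schreier (K : Type) [Field K] [Fintype K] [Algebra (ZMod 2) K]
    (x : K) (hx : Algebra.trace (ZMod 2) K x = 0) :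
    ∃ y : K, y * y + y = x := by
  classical
  haveI : CharP K 2 := charP_of_injective_algebraMap (algebraMap (ZMod 2) K).injective 2
  have h2K : (2 : K) = 0 := by
    simpa using (CharP.cast_eq_zero K 2)
  -- Frobenius as an algebra equivalence over ZMod 2
  let e : K ≃ₐ[ZMod 2] K := AlgEquiv.ofRingEquiv (f := frobeniusEquiv K 2) (fun r => by
    have hr : r ^ 2 = r := by revert r; decide
    simp only [frobeniusEquiv_apply, frobenius_def, ← map_pow, hr])
  have key : ∀ y : K, Algebra.trace (ZMod 2) K (y * y) = Algebra.trace (ZMod 2) K y := by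
    intro y
    have h1 := Algebra.trace_eq_of_algEquiv e y
    have h2 : e y = y * y := by
      simp [e, AlgEquiv.ofRingEquiv, frobeniusEquiv_apply, frobenius_def, sq]
    rw [h2] at h1
    exact h1
  -- The Artin–Schreier map as an additive hom
  let F : K →+ K :=
    { toFun := fun y => y * y + y
      map_zero' := by ring_nf
      map_add' := fun a b => by linear_combination (a * b) * h2K }
  let T : K →+ ZMod 2 := (Algebra.trace (ZMod 2) K).toAddMonoidHom
  have hAB : F.range ≤ T.ker := by
    rintro _ ⟨y, rfl⟩
    show T (y * y + y) = 0
    have : T (y * y + y) = Algebra.trace (ZMod 2) K (y * y) + Algebra.trace (ZMod 2) K y := by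
      simp [T]
    rw [this, key y, CharTwo.add_self_eq_zero]
  -- cardinality of the kernel of F
  have hkerF : (F.ker : Set K) = {0, 1} := by
    ext y
    simp only [AddMonoidHom.mem_ker, Set.mem_insert_iff, Set.mem_singleton_iff, SetLike.mem_coe]
    constructor
    · intro hy
      have hy' : y * y + y = 0 := hy
      have : y * (y + 1) = 0 := by linear_combination hy'
      rcases mul_eq_zero.1 this with h | h
      · exact Or.inl h
      · right; linear_combination h - h2K
    · rintro (rfl | rfl)
      · show (0 : K) * 0 + 0 = 0; ring
      · show (1 : K) * 1 + 1 = 0; linear_combination h2K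
  have hcardkerF : Nat.card F.ker = 2 := by
    have h1 : Nat.card F.ker = Nat.card ({0, 1} : Set K) :=
      Nat.card_congr (Equiv.setCongr hkerF)
    rw [h1, Nat.card_coe_set_eq, Set.ncard_pair (zero_ne_one)]
  -- surjectivity of the trace
  haveI : Algebra.IsSeparable (ZMod 2) K := inferInstance
  have htr_ne : Algebra.trace (ZMod 2) K ≠ 0 := Algebra.trace_ne_zero (ZMod 2) K
  obtain ⟨x0, hx0⟩ : ∃ x0 : K, Algebra.trace (ZMod 2) K x0 ≠ 0 := by
    by_contra hcon
    push_neg at hcon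
    exact htr_ne (LinearMap.ext fun y => hcon y)
  have hTsurj : Function.Surjective T := by
    intro t
    have ht : t = 0 ∨ t = 1 := by revert t; decide
    rcases ht with rfl | rfl
    · exact ⟨0, by simp [T]⟩
    · refine ⟨x0, ?_⟩
      have : ∀ u : ZMod 2, u ≠ 0 → u = 1 := by decide
      exact this _ hx0
  have hrangeT : Nat.card T.range = 2 := by
    rw [(AddMonoidHom.range_eq_top).2 hTsurj]
    rw [Nat.card_congr AddSubgroup.topEquiv.toEquiv, Nat.card_zmod]
  -- counting
  have e1 := AddSubgroup.card_eq_card_quotient_mul_card_addSubgroup F.ker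
  have e2 : Nat.card (K ⧸ F.ker) = Nat.card F.range :=
    Nat.card_congr (QuotientAddGroup.quotientKerEquivRange F).toEquiv
  have e3 := AddSubgroup.card_eq_card_quotient_mul_card_addSubgroup T.ker
  have e4 : Nat.card (K ⧸ T.ker) = Nat.card T.range :=
    Nat.card_congr (QuotientAddGroup.quotientKerEquivRange T).toEquiv
  have hcards : Nat.card T.ker ≤ Nat.card F.range := by
    rw [e2, hcardkerF] at e1
    rw [e4, hrangeT] at e3
    omega
  have hBA : T.ker = F.range := (AddSubgroup.eq_of_le_of_card_ge hAB hcards).symm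
  have hxB : x ∈ T.ker := hx
  rw [hBA] at hxB
  obtain ⟨y, hy⟩ := hxB
  exact ⟨y, hy⟩

theorem stmt_13 (s : ℕ) (hs : 1 ≤ s)
    (K L : Type) [Field K] [Fintype K] [Field L] [Fintype L] [Algebra K L]
    [Algebra (ZMod 2) K]
    (hK : Fintype.card K = 2 ^ s) (hL : Fintype.card L = 2 ^ (2 * s))
    (w : L) (hw : w ∉ Set.range (algebraMap K L))
    (htr : Algebra.trace (ZMod 2) K ((Algebra.trace K L w)⁻¹) = 0) :
    w ^ (2 ^ s + 1) ≠ 1 := by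
  intro h
  classical
  haveI : CharP K 2 := charP_of_injective_algebraMap (algebraMap (ZMod 2) K).injective 2
  haveI : CharP L 2 := charP_of_injective_algebraMap (algebraMap K L).injective 2
  have h2L : (2 : L) = 0 := by simpa using (CharP.cast_eq_zero L 2)
  have h2K : (2 : K) = 0 := by simpa using (CharP.cast_eq_zero K 2)
  have hmul : w ^ 2 ^ s * w = 1 := by rw [← pow_succ]; exact h
  have hwL : (w ^ 2 ^ s) ^ 2 ^ s = w := by
    rw [← pow_mul, ← pow_add, ← two_mul, ← hL]
    exact FiniteField.pow_card w
  -- c = w + w^q is fixed by the q-power map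
  have hcfix : (w + w ^ 2 ^ s) ^ Fintype.card K = w + w ^ 2 ^ s := by
    rw [hK, add_pow_char_pow, hwL, add_comm]
  obtain ⟨c₀, hc₀⟩ := aux_fixed_mem_range K L _ hcfix
  have hc0 : c₀ ≠ 0 := by
    rintro rfl
    rw [map_zero] at hc₀
    have hfix : w ^ Fintype.card K = w := by
      have : w ^ 2 ^ s = - w := by linear_combination -hc₀
      rw [hK, this]
      rw [CharTwo.neg_eq]
    exact hw (aux_fixed_mem_range K L w hfix)
  -- finrank K L = 2
  have hfin : Module.finrank K L = 2 := by
    have hcard := Module.card_eq_pow_finrank (K := K) (V := L)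
    rw [hK, hL, ← pow_mul] at hcard
    have h24 := Nat.pow_right_injective (le_refl 2) hcard
    rw [mul_comm 2 s] at h24
    exact (Nat.eq_of_mul_eq_mul_left (by omega) h24).symm
  -- basis {1, w}
  have li : LinearIndependent K ![(1 : L), w] := by
    rw [LinearIndependent.pair_iff' one_ne_zero]
    intro a ha
    exact hw ⟨a, by rw [← ha, Algebra.smul_def, mul_one]⟩
  have hcard2 : Fintype.card (Fin 2) = Module.finrank K L := by simp [hfin]
  set b := basisOfLinearIndependentOfCardEqFinrank li hcard2 with hbdef
  have hb : ⇑b = ![(1 : L), w] := coe_basisOfLinearIndependentOfCardEqFinrank li hcard2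
  have hb0 : b 0 = 1 := by rw [hb]; rfl
  have hb1 : b 1 = w := by rw [hb]; rfl
  -- w² = 1 + c·w
  have hw2 : w * w = b 0 + c₀ • b 1 := by
    rw [hb0, hb1, Algebra.smul_def, hc₀]
    linear_combination -hmul - h2L
  -- trace computation
  have htrw : Algebra.trace K L w = c₀ := by
    rw [Algebra.trace_eq_matrix_trace b w, Matrix.trace, Fin.sum_univ_two]
    rw [Matrix.diag_apply, Matrix.diag_apply, Algebra.leftMulMatrix_eq_repr_mul,
      Algebra.leftMulMatrix_eq_repr_mul]
    have r0 : b.repr (w * b 0) 0 = 0 := by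
      rw [hb0, mul_one, ← hb1, b.repr_self]
      simp
    have r1 : b.repr (w * b 1) 1 = c₀ := by
      rw [hb1, hw2, map_add, map_smul, b.repr_self, b.repr_self]
      simp
    rw [r0, r1, zero_add]
  rw [htrw] at htr
  -- Artin–Schreier element
  obtain ⟨y, hy⟩ := aux_artin_schreier K _ htr
  have hinv : c₀ * c₀⁻¹ = 1 := mul_inv_cancel₀ hc0
  have hy2 : (y * y) * (y * y) + (y * y) = c₀⁻¹ * c₀⁻¹ := by
    linear_combination (y * y + y + c₀⁻¹) * hy - y * y * y * h2K
  obtain ⟨l, hl⟩ : ∃ l : K, l * l + c₀ * l + 1 = 0 :=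
    ⟨c₀ * (y * y), by linear_combination (c₀ * c₀) * hy2 + (c₀ * c₀⁻¹ + 1) * hinv + h2K⟩
  -- push to L and factor
  set m := algebraMap K L l with hm_def
  have hlL : m * m + (w + w ^ 2 ^ s) * m + 1 = 0 := by
    have h5 : algebraMap K L (l * l + c₀ * l + 1) = algebraMap K L 0 := by rw [hl]
    rw [map_add, map_add, map_mul, map_mul, map_one, map_zero, hc₀] at h5
    exact h5
  have hfac : (m + w) * (m + w ^ 2 ^ s) = 0 := by
    linear_combination hlL + hmul
  rcases mul_eq_zero.1 hfac with h1 | h1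
  · have : w = m := by
      have := neg_eq_of_add_eq_zero_right h1
      rw [CharTwo.neg_eq] at this
      exact this.symm
    exact hw ⟨l, this.symm⟩
  · have hwq : w ^ 2 ^ s = m := by
      have := neg_eq_of_add_eq_zero_right h1
      rw [CharTwo.neg_eq] at this
      exact this.symm
    have : w = algebraMap K L (l ^ 2 ^ s) := by
      rw [map_pow, ← hm_def, ← hwq, hwL]
    have hl_pow : l ^ 2 ^ s = l := by
      rw [← hK]; exact FiniteField.pow_card l
    rw [hl_pow] at this
    exact hw ⟨l, this.symm⟩
end

section
/- Let K = GF(q) ⊂ L = GF(q^2), q = 2^s. The middle nucleus of the semifield B_q(w) contains L, that is, ((a,b) ⋆ (λ,0)) ⋆ (c,d) = (a,b) ⋆ ((λ,0) ⋆ (c,d)) for all λ ∈ L and all (a,b), (c,d) ∈ L × L. -/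
theorem stmt_14 (s : ℕ) (hs : 1 ≤ s)
    (K L : Type) [Field K] [Fintype K] [Field L] [Fintype L] [Algebra K L]
    [Algebra (ZMod 2) K]
    (hK : Fintype.card K = 2 ^ s) (hL : Fintype.card L = 2 ^ (2 * s))
    (w : L) (hw : w ∉ Set.range (algebraMap K L))
    (htr : Algebra.trace (ZMod 2) K ((Algebra.trace K L w)⁻¹) = 0)
    (mul : L × L → L × L → L × L)
    (hmul : ∀ a b c d : L, mul (a, b) (c, d) =
      (a * c + b * d ^ (2 ^ s) + w * b ^ (2 ^ s) * d, a ^ (2 ^ s) * d + b * c)) :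
    ∀ (lam : L) (x y : L × L),
      mul (mul x (lam, 0)) y = mul x (mul (lam, 0) y) := by
  have hpow : ∀ x : L, (x ^ (2 ^ s)) ^ (2 ^ s) = x := by
    intro x
    rw [← pow_mul, ← pow_add, ← two_mul, ← hL, FiniteField.pow_card]
  rintro lam ⟨a, b⟩ ⟨c, d⟩
  simp only [hmul]
  simp only [hmul, mul_zero, zero_mul, add_zero, mul_pow, hpow,
    zero_pow (pow_ne_zero s (two_ne_zero)), Prod.mk.injEq]
  constructor <;> ring
end

section
/- Let L = GF(2^m), σ = 2^s with m/gcd(m,s) odd, K_1 the fixed field of σ in L, p_4 ∈ L such that X^{σ+1} + X + p_4 has no root in L, and f(X) = p_4^σ X^{σ²} + X^σ + p_4 X. Then f : L → L is an invertible F_2-linear map. -/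
/-!
The map `f x = c^σ x^{σ²} + x^σ + c x` is additive in characteristic `2`, so on the finite field
`L` it suffices to show that its kernel is trivial. If `f x = 0` with `x ≠ 0`, put `t = x^σ / x`;
dividing by `x` and multiplying by `c` shows that `c t` is a root of `Y^{σ+1} + Y + c²`. Its square
root in the perfect field `L` is then a root of `Y^{σ+1} + Y + c`, which is excluded.
-/

open Function

theorem root_of_linearized_eq_zero {L : Type*} [Field L] (q : ℕ) (c x : L) (hx : x ≠ 0)
    (h : c ^ q * x ^ (q * q) + x ^ q + c * x = 0) :
    (c * (x ^ q / x)) ^ (q + 1) + c * (x ^ q / x) + c ^ 2 = 0 := by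
  set t := x ^ q / x
  have ht : x ^ q = t * x := (div_mul_cancel₀ _ hx).symm
  have hfactor : x * (c ^ q * t ^ (q + 1) + t + c) = 0 := by
    rw [← h, pow_mul, ht, mul_pow, ht]
    ring
  have ht_root := (mul_eq_zero.mp hfactor).resolve_left hx
  linear_combination c * ht_root

theorem exists_root_of_root_of_const_sq {L : Type*} [CommRing L] [CharP L 2] [PerfectRing L 2]
    (q : ℕ) {c y : L} (hy : y ^ (q + 1) + y + c ^ 2 = 0) : ∃ z : L, z ^ (q + 1) + z + c = 0 := by
  obtain ⟨z, rfl⟩ := surjective_frobenius L 2 y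
  refine ⟨z, (bijective_frobenius L 2).1 ?_⟩
  rw [frobenius_def, map_zero, add_pow_char, add_pow_char, ← pow_mul, mul_comm (q + 1) 2, pow_mul]
  exact hy

theorem injective_linearized_of_forall_ne_zero {L : Type*} [Field L] [CharP L 2]
    [PerfectRing L 2] (s : ℕ) {c : L} (hc : ∀ z : L, z ^ (2 ^ s + 1) + z + c ≠ 0) :
    Injective (fun x : L => c ^ 2 ^ s * x ^ 2 ^ (2 * s) + x ^ 2 ^ s + c * x) := by
  intro a b hab
  have hker : c ^ 2 ^ s * (a - b) ^ (2 ^ s * 2 ^ s) + (a - b) ^ 2 ^ s + c * (a - b) = 0 := by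
    rw [← pow_add, ← two_mul, sub_pow_char_pow, sub_pow_char_pow]
    linear_combination hab
  by_contra hne
  obtain ⟨z, hz⟩ := exists_root_of_root_of_const_sq (2 ^ s)
    (root_of_linearized_eq_zero _ c _ (sub_ne_zero.mpr hne) hker)
  exact hc z hz

theorem stmt_16_general (m s : ℕ)
    (L : Type) [Field L] [Fintype L] (hL : Fintype.card L = 2 ^ m)
    (p4 : L) (hp4 : ∀ x : L, x ^ (2 ^ s + 1) + x + p4 ≠ 0) :
    Function.Bijective
      (fun x : L => p4 ^ (2 ^ s) * x ^ (2 ^ (2 * s)) + x ^ (2 ^ s) + p4 * x) := by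
  have : CharP L 2 := charP_of_card_eq_prime_pow hL
  exact Finite.injective_iff_bijective.mp (injective_linearized_of_forall_ne_zero s hp4)

theorem stmt_16 (m s : ℕ) (hm : 1 ≤ m) (hodd : Odd (m / Nat.gcd m s))
    (L : Type) [Field L] [Fintype L] (hL : Fintype.card L = 2 ^ m)
    (p4 : L) (hp4 : ∀ x : L, x ^ (2 ^ s + 1) + x + p4 ≠ 0) :
    Function.Bijective
      (fun x : L => p4 ^ (2 ^ s) * x ^ (2 ^ (2 * s)) + x ^ (2 ^ s) + p4 * x) :=
  stmt_16_general m s L hL p4 hp4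
end

section
/- Let L = GF(2^m), σ = 2^s, and suppose l ∈ L* satisfies l ∉ (L*)^{σ−1}, and p_4, v_2, v_4 ∈ L with v_2 ≠ 0, v_4 = l p_4 v_2^σ and p_4 v_2 = l v_4^σ. Then p_4 = 0; that is, if p_4 ≠ 0 then no such v_2 ≠ 0 exists. -/
theorem stmt_18 (m s : ℕ) (hm : 1 ≤ m)
    (L : Type) [Field L] [Fintype L] (hL : Fintype.card L = 2 ^ m)
    (l : L) (hl : l ≠ 0) (hl' : ¬ ∃ c : L, c ≠ 0 ∧ l = c ^ (2 ^ s - 1))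
    (p4 v2 v4 : L) (hv2 : v2 ≠ 0)
    (e1 : v4 = l * p4 * v2 ^ (2 ^ s)) (e2 : p4 * v2 = l * v4 ^ (2 ^ s)) :
    p4 = 0 := by
  by_contra hp4
  rcases Nat.eq_zero_or_pos s with hs | hs
  · -- s = 0 : char 2 argument
    subst hs
    simp only [pow_zero, pow_one] at e1 e2 hl'
    have hl2 : l ^ 2 = 1 := by
      have h : l ^ 2 * (p4 * v2) = 1 * (p4 * v2) := by
        rw [one_mul]; linear_combination -e2 - l * e1
      exact mul_right_cancel₀ (mul_ne_zero hp4 hv2) h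
    obtain ⟨p, hp⟩ := CharP.exists L
    haveI := hp
    have hprime : p.Prime := CharP.char_is_prime L p
    obtain ⟨n, -, hcard⟩ := FiniteField.card L p
    have hp2 : p = 2 := by
      have hdvd : p ∣ 2 ^ m := by
        rw [← hL, hcard]; exact dvd_pow_self p n.ne_zero
      have := hprime.dvd_of_dvd_pow (n := m) (by simpa using hdvd)
      exact (Nat.prime_dvd_prime_iff_eq hprime Nat.prime_two).mp this
    subst hp2
    have h2 : (2 : L) = 0 := by exact_mod_cast CharP.cast_eq_zero L 2
    have hsq : (l - 1) ^ 2 = 0 := by linear_combination hl2 + (1 - l) * h2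
    have hl1 : l = 1 :=
      sub_eq_zero.mp (pow_eq_zero_iff (n := 2) (by norm_num) |>.mp hsq)
    exact hl' ⟨1, one_ne_zero, by simp [hl1]⟩
  · -- s ≥ 1
    obtain ⟨k, hk1, hσk⟩ : ∃ k, 1 ≤ k ∧ 2 ^ s = 2 * k :=
      ⟨2 ^ (s - 1), Nat.one_le_two_pow, by
        rw [← pow_succ']; congr 1; omega⟩
    obtain ⟨σ, hσeq⟩ : ∃ σ, 2 ^ s = σ := ⟨_, rfl⟩
    rw [hσeq] at e1 e2 hl' hσk
    have hσ1 : 1 ≤ σ := by omega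
    have key : p4 * v2 = l ^ (σ + 1) * p4 ^ σ * v2 ^ (σ * σ) := by
      rw [e2, e1, mul_pow, mul_pow, ← pow_mul, pow_succ]; ring
    have hpv : p4 * v2 ^ (σ + 1) ≠ 0 := mul_ne_zero hp4 (pow_ne_zero _ hv2)
    have hσsub : (σ + 1) * (σ - 1) = σ * σ - 1 := by
      obtain ⟨t, ht⟩ : ∃ t, σ = t + 1 := ⟨σ - 1, by omega⟩
      subst ht
      have h : (t + 1) * (t + 1) = (t + 1 + 1) * t + 1 := by ring
      simp only [Nat.add_sub_cancel]
      omega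
    have unit_eq : l ^ (σ + 1) * (p4 * v2 ^ (σ + 1)) ^ (σ - 1) = 1 := by
      have hσσ : 1 ≤ σ * σ := Nat.one_le_iff_ne_zero.mpr (by positivity)
      have hcancel : (p4 * v2) * (l ^ (σ + 1) * (p4 * v2 ^ (σ + 1)) ^ (σ - 1))
          = (p4 * v2) * 1 := by
        rw [mul_one]
        calc (p4 * v2) * (l ^ (σ + 1) * (p4 * v2 ^ (σ + 1)) ^ (σ - 1))
            = l ^ (σ + 1) * p4 ^ (1 + (σ - 1)) * v2 ^ (1 + (σ + 1) * (σ - 1)) := by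
              rw [mul_pow, ← pow_mul, pow_add, pow_add]; ring
          _ = l ^ (σ + 1) * p4 ^ σ * v2 ^ (σ * σ) := by
              rw [hσsub]
              have h1 : 1 + (σ - 1) = σ := by omega
              have h2 : 1 + (σ * σ - 1) = σ * σ := by omega
              rw [h1, h2]
          _ = p4 * v2 := key.symm
      exact mul_left_cancel₀ (mul_ne_zero hp4 hv2) hcancel
    -- move to units
    set u : Lˣ := Units.mk0 l hl with hu_def
    set x : Lˣ := Units.mk0 (p4 * v2 ^ (σ + 1)) hpv with hx_def
    have hu : u ^ (σ + 1) = (x⁻¹) ^ (σ - 1) := by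
      rw [inv_pow, eq_inv_iff_mul_eq_one]
      ext
      push_cast
      exact unit_eq
    have hnat : k * (σ + 1) = (k + 1) * (σ - 1) + 1 := by
      obtain ⟨j, hj⟩ : ∃ j, k = j + 1 := ⟨k - 1, by omega⟩
      subst hj hσk
      have h1 : 2 * (j + 1) - 1 = 2 * j + 1 := by omega
      rw [h1]
      ring
    set c : Lˣ := (x⁻¹) ^ k * u⁻¹ ^ (k + 1) with hc_def
    have hc : c ^ (σ - 1) = u := by
      rw [hc_def, mul_pow, ← pow_mul, ← pow_mul]
      have e : (x⁻¹) ^ (k * (σ - 1)) = u ^ (k * (σ + 1)) := by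
        rw [mul_comm k (σ - 1), pow_mul, ← hu, ← pow_mul, mul_comm]
      rw [e, hnat, pow_succ, inv_pow, mul_comm (k + 1) (σ - 1)]
      rw [mul_right_comm, mul_inv_cancel, one_mul]
    refine hl' ⟨(c : L), c.ne_zero, ?_⟩
    have hcc : ((c ^ (σ - 1) : Lˣ) : L) = l := by rw [hc]; rfl
    rw [← hcc]
    push_cast
    rfl
end

section
/- Let L = GF(2^m), σ = 2^s with m/gcd(m,s) even, and p_4 ∈ L* \ (L*)^{σ+1}. If A, B, C, D ∈ L satisfy A = D^σ, B = p_4 C^σ, A^σ = D, B^σ = p_4 C, then B = C = 0, D = A^σ, and A lies in the fixed field of σ² in L. -/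
/-!
Put `x = B * C = p4 * C ^ (2 ^ s + 1)`. The equations give `x ^ (2 ^ s) = B ^ (2 ^ s) * C ^ (2 ^ s)
= p4 * C * C ^ (2 ^ s) = x`, so `x` lies in the subfield fixed by `2 ^ d`-th powers,
`d = gcd m s`. There `x ^ (2 ^ d - 1) = 1`, and `2 ^ s + 1` is prime to `2 ^ d - 1` because
`2 ^ d - 1` is odd and divides `2 ^ s - 1`. Hence `x` is a `(2 ^ s + 1)`-st power, and if
`C ≠ 0` so is `p4 = x / C ^ (2 ^ s + 1)`.
-/

lemma pow_pow_gcd_eq_self {M : Type*} [Monoid M] {x : M} {n a b : ℕ}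
    (ha : x ^ n ^ a = x) (hb : x ^ n ^ b = x) : x ^ n ^ a.gcd b = x := by
  have hper : ∀ k, x ^ n ^ k = x → Function.IsPeriodicPt (· ^ n) k x := fun k hk => by
    simpa [Function.IsPeriodicPt, Function.IsFixedPt, pow_iterate] using hk
  simpa [Function.IsPeriodicPt, Function.IsFixedPt, pow_iterate] using
    (hper a ha).gcd (hper b hb)

lemma Nat.coprime_two_pow_add_one_two_pow_sub_one {d s : ℕ} (hd : 0 < d) (hds : d ∣ s) :
    Nat.Coprime (2 ^ s + 1) (2 ^ d - 1) := by
  obtain ⟨k, hk⟩ : 2 ^ d - 1 ∣ 2 ^ s - 1 := Nat.pow_sub_one_dvd_pow_sub_one 2 hds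
  have hsum : 2 ^ s + 1 = 2 + k * (2 ^ d - 1) := by
    have := Nat.one_le_two_pow (n := s)
    rw [mul_comm, ← hk]; omega
  have hodd : Odd (2 ^ d - 1) := by
    have := Nat.one_le_two_pow (n := d)
    rw [Nat.odd_sub this]; simp [Nat.even_pow, hd.ne']
  rw [Nat.coprime_comm, hsum, Nat.coprime_add_mul_right_right]
  exact hodd.coprime_two_right

lemma exists_pow_eq_of_pow_eq_one {M : Type*} [Monoid M] {x : M} {k n : ℕ}
    (hx : x ^ n = 1) (hkn : k.Coprime n) : ∃ c : M, c ^ k = x := by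
  obtain ⟨j, hj⟩ :=
    exists_pow_eq_self_of_coprime (hkn.coprime_dvd_right (orderOf_dvd_of_pow_eq_one hx))
  exact ⟨x ^ j, by rw [← pow_mul, mul_comm, pow_mul, hj]⟩

lemma exists_pow_two_pow_add_one_eq {L : Type*} [Field L] [Fintype L] {m s : ℕ}
    (hL : Fintype.card L = 2 ^ m) {x : L} (hx0 : x ≠ 0) (hx : x ^ 2 ^ s = x) :
    ∃ c : L, c ^ (2 ^ s + 1) = x := by
  have hm : 0 < m := by
    by_contra! h
    have := Fintype.one_lt_card (α := L)
    simp_all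
  have hd : x ^ 2 ^ m.gcd s = x := pow_pow_gcd_eq_self (hL ▸ FiniteField.pow_card x) hx
  have hunit : x ^ (2 ^ m.gcd s - 1) = 1 := by
    refine mul_left_cancel₀ hx0 ?_
    rw [mul_one, ← pow_succ', Nat.sub_add_cancel Nat.one_le_two_pow, hd]
  exact exists_pow_eq_of_pow_eq_one hunit
    (Nat.coprime_two_pow_add_one_two_pow_sub_one (Nat.gcd_pos_of_pos_left s hm)
      (Nat.gcd_dvd_right m s))

theorem stmt_19_general (m s : ℕ)
    (L : Type) [Field L] [Fintype L] (hL : Fintype.card L = 2 ^ m)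
    (p4 : L) (hp4 : p4 ≠ 0) (hp4' : ¬ ∃ c : L, c ≠ 0 ∧ p4 = c ^ (2 ^ s + 1))
    (A B C D : L)
    (h1 : A = D ^ (2 ^ s)) (h2 : B = p4 * C ^ (2 ^ s))
    (h3 : A ^ (2 ^ s) = D) (h4 : B ^ (2 ^ s) = p4 * C) :
    B = 0 ∧ C = 0 ∧ D = A ^ (2 ^ s) ∧ A ^ (2 ^ (2 * s)) = A := by
  have hC : C = 0 := by
    by_contra hC
    have hBC : (B * C) ^ 2 ^ s = B * C := by rw [mul_pow, h4, h2]; ring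
    have hBC0 : B * C ≠ 0 := mul_ne_zero (h2 ▸ mul_ne_zero hp4 (pow_ne_zero _ hC)) hC
    obtain ⟨c, hc⟩ := exists_pow_two_pow_add_one_eq hL hBC0 hBC
    have hc0 : c ≠ 0 := by rintro rfl; simp [eq_comm, hBC0] at hc
    refine hp4' ⟨c / C, div_ne_zero hc0 hC, ?_⟩
    rw [div_pow, hc, h2]
    field_simp
    ring
  refine ⟨by simp [h2, hC], hC, h3.symm, ?_⟩
  rw [two_mul, pow_add, pow_mul, h3, ← h1]

theorem stmt_19 (m s : ℕ) (hm : 1 ≤ m) (heven : Even (m / Nat.gcd m s))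
    (L : Type) [Field L] [Fintype L] (hL : Fintype.card L = 2 ^ m)
    (p4 : L) (hp4 : p4 ≠ 0) (hp4' : ¬ ∃ c : L, c ≠ 0 ∧ p4 = c ^ (2 ^ s + 1))
    (A B C D : L)
    (h1 : A = D ^ (2 ^ s)) (h2 : B = p4 * C ^ (2 ^ s))
    (h3 : A ^ (2 ^ s) = D) (h4 : B ^ (2 ^ s) = p4 * C) :
    B = 0 ∧ C = 0 ∧ D = A ^ (2 ^ s) ∧ A ^ (2 ^ (2 * s)) = A :=
  stmt_19_general m s L hL p4 hp4 hp4' A B C D h1 h2 h3 h4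
end
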